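/- arXiv:1103.0337 — 6 statements merged into one kernel-verified Lean document; each statement's English description precedes it below -/
import Mathlib

section
/- Let E : y² = x³ + A·x + B be an elliptic curve over a field K. Let R = (a, b) and S = (c, d) be affine points on E with a ≠ c, let k = (d − b)/(c − a) be the chord slope, and set α = k² − a − c (the x-coordinate of R + S). Define the line function through R and S by L_{R,S}(x, y) = y − b − k·(x − a), the line function through −R = (a, −b) and −S = (c, −d) by L_{−R,−S}(x, y) = y + b + k·(x − a), and vertical line functions V_R(x, y) = x − a, V_S(x, y) = x − c, V_{R+S}(x, y) = x − α. Then for every point Q = (x, y) ∈ K² satisfying y² = x³ + A·x + B, one has L_{R,S}(Q)·L_{−R,−S}(Q) = V_R(Q)·V_S(Q)·V_{R+S}(Q). -/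
/-!
Substituting the chord `Y = b + k (X - a)` into the curve equation leaves the monic cubic
`X³ + A X + B - (b + k (X - a))²`, whose roots are `a`, `c` and, by Vieta (the `X²`-coefficient is
`-k²`), `k² - a - c`; this is `WeierstrassCurve.Affine.addPolynomial_slope`. On the curve the
cubic equals `y² - (b + k (x - a))²`, the product of the two line functions.
-/

open Polynomial WeierstrassCurve.Affine

lemma WeierstrassCurve.Affine.eval_addPolynomial {R : Type*} [CommRing R]
    (W : WeierstrassCurve.Affine R) (x y ℓ t : R) :
    (W.addPolynomial x y ℓ).eval t = W.polynomial.evalEval t (ℓ * (t - x) + y) := by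
  rw [evalEval_polynomial, addPolynomial, linePolynomial, WeierstrassCurve.Affine.polynomial]
  simp only [eval_add, eval_sub, eval_mul, eval_pow, eval_C, eval_X]
  ring

def shortWeierstrass {R : Type*} [CommRing R] (A B : R) : WeierstrassCurve.Affine R :=
  ⟨0, 0, 0, A, B⟩

section

variable {R : Type*} [CommRing R] (A B : R)

lemma evalEval_polynomial_shortWeierstrass (x y : R) :
    (shortWeierstrass A B).polynomial.evalEval x y = y ^ 2 - (x ^ 3 + A * x + B) := by
  simp [evalEval_polynomial, shortWeierstrass]

lemma shortWeierstrass_equation_iff (x y : R) :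
    (shortWeierstrass A B).Equation x y ↔ y ^ 2 = x ^ 3 + A * x + B := by
  rw [Equation, evalEval_polynomial_shortWeierstrass, sub_eq_zero]

end

lemma secant_sq_sub_cubic_eq {K : Type*} [Field K] {A B a b c d k : K}
    (hR : b ^ 2 = a ^ 3 + A * a + B) (hS : d ^ 2 = c ^ 3 + A * c + B) (hac : a ≠ c)
    (hk : k = (d - b) / (c - a)) (x : K) :
    (k * (x - a) + b) ^ 2 - (x ^ 3 + A * x + B) =
      -((x - a) * (x - c) * (x - (k ^ 2 - a - c))) := by
  classical
  have hslope : (shortWeierstrass A B).slope a c b d = k := by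
    rw [slope_of_X_ne hac, hk, ← neg_div_neg_eq, neg_sub, neg_sub]
  have h := congrArg (eval x) <| addPolynomial_slope
    ((shortWeierstrass_equation_iff A B a b).mpr hR) ((shortWeierstrass_equation_iff A B c d).mpr hS)
    (fun h => hac h.1)
  rw [hslope, eval_addPolynomial, evalEval_polynomial_shortWeierstrass] at h
  simpa [shortWeierstrass] using h

/-- **Lemma 2 of the paper (chord case).**
Let `R = (a, b)` and `S = (c, d)` be affine points on `E : y² = x³ + A·x + B` with
`a ≠ c`, let `k = (d − b)/(c − a)` and `α = k² − a − c`.  With the line functions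
`L_{R,S}(x, y) = y − b − k·(x − a)`, `L_{−R,−S}(x, y) = y + b + k·(x − a)` and the
vertical line functions `V_R(x, y) = x − a`, `V_S(x, y) = x − c`,
`V_{R+S}(x, y) = x − α`, every point `Q = (x, y)` on `E` satisfies
`L_{R,S}(Q)·L_{−R,−S}(Q) = V_R(Q)·V_S(Q)·V_{R+S}(Q)`. -/
theorem line_times_oppositeLine_eq_verticals_chord {K : Type*} [Field K]
    (A B a b c d k α : K)
    (hR : b ^ 2 = a ^ 3 + A * a + B) (hS : d ^ 2 = c ^ 3 + A * c + B)
    (hac : a ≠ c) (hk : k = (d - b) / (c - a)) (hα : α = k ^ 2 - a - c) :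
    ∀ x y : K, y ^ 2 = x ^ 3 + A * x + B →
      (y - b - k * (x - a)) * (y + b + k * (x - a)) =
        (x - a) * (x - c) * (x - α) := by
  intro x y hQ
  subst hα
  linear_combination hQ - secant_sq_sub_cubic_eq hR hS hac hk x
end

section
/- Let E : y² = x³ + A·x + B be an elliptic curve over a field K with char K ≠ 2. Let T = (a, b) be an affine point on E with b ≠ 0, let k = (3a² + A)/(2b) be the tangent slope at T, and set α = k² − 2a (the x-coordinate of 2T). Define L_{T,T}(x, y) = y − b − k·(x − a) (the tangent line at T), L_{−T,−T}(x, y) = y + b + k·(x − a) (the tangent line at −T), V_T(x, y) = x − a, and V_{2T}(x, y) = x − α. Then for every point Q = (x, y) ∈ K² satisfying y² = x³ + A·x + B, one has L_{T,T}(Q)·L_{−T,−T}(Q) = V_T(Q)²·V_{2T}(Q). -/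
theorem tangent_mul_oppositeTangent_eq_of_tangency {R : Type*} [CommRing R]
    {A B a b k x y : R} (hT : b ^ 2 = a ^ 3 + A * a + B) (hk : k * (2 * b) = 3 * a ^ 2 + A)
    (hQ : y ^ 2 = x ^ 3 + A * x + B) :
    (y - b - k * (x - a)) * (y + b + k * (x - a)) = (x - a) ^ 2 * (x - (k ^ 2 - 2 * a)) := by
  -- The left side is `y² - (b + k (x - a))²`; on the curve `y² - b²` is divisible by `x - a`,
  -- and the tangency condition makes the remaining linear factor vanish at `x = a` too.
  linear_combination hQ - hT - (x - a) * hk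

/-- **Lemma 2 of the paper (doubling case).**
Let `T = (a, b)` be an affine point on `E : y² = x³ + A·x + B` over a field of
characteristic `≠ 2`, with `b ≠ 0`, tangent slope `k = (3a² + A)/(2b)` and
`α = k² − 2a`.  With `L_{T,T}(x, y) = y − b − k·(x − a)`,
`L_{−T,−T}(x, y) = y + b + k·(x − a)`, `V_T(x, y) = x − a` and
`V_{2T}(x, y) = x − α`, every point `Q = (x, y)` on `E` satisfies
`L_{T,T}(Q)·L_{−T,−T}(Q) = V_T(Q)²·V_{2T}(Q)`. -/
theorem tangent_times_oppositeTangent_eq_verticals {K : Type*} [Field K]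
    (hchar : ringChar K ≠ 2) (A B a b k α : K)
    (hT : b ^ 2 = a ^ 3 + A * a + B) (hb : b ≠ 0)
    (hk : k = (3 * a ^ 2 + A) / (2 * b)) (hα : α = k ^ 2 - 2 * a) :
    ∀ x y : K, y ^ 2 = x ^ 3 + A * x + B →
      (y - b - k * (x - a)) * (y + b + k * (x - a)) =
        (x - a) ^ 2 * (x - α) := by
  intro x y hQ
  have h2b : 2 * b ≠ 0 := mul_ne_zero (Ring.two_ne_zero hchar) hb
  subst hα
  exact tangent_mul_oppositeTangent_eq_of_tangency hT ((eq_div_iff h2b).mp hk) hQ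
end

section
/- Let E : y² = x³ + A·x + B be an elliptic curve over a field K with char K ≠ 2. Let T = (a, b) be an affine point on E with b ≠ 0, let k = (3a² + A)/(2b), and set α = k² − 2a. Let Q = (x, y) be a point of E with x ≠ a, x ≠ α, and y + b + k·(x − a) ≠ 0. Then L_{T,T}(Q)/(V_T(Q)²·V_{2T}(Q)) = 1/L_{−T,−T}(Q), where L_{T,T}(Q) = y − b − k·(x − a), L_{−T,−T}(Q) = y + b + k·(x − a), V_T(Q) = x − a, and V_{2T}(Q) = x − α. -/
/- On `E`, `y² − (b + k(x − a))²` is a monic cubic in `x`; the tangent line meets `E` doubly at `a`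
and once more at `α`, so this cubic is `(x − a)²(x − α)`. -/
theorem tangent_mul_oppositeTangent_eq_verticals {K : Type*} [CommRing K] {A B a b k x y : K}
    (hT : b ^ 2 = a ^ 3 + A * a + B) (hQ : y ^ 2 = x ^ 3 + A * x + B)
    (hk : k * (2 * b) = 3 * a ^ 2 + A) :
    (y - b - k * (x - a)) * (y + b + k * (x - a)) = (x - a) ^ 2 * (x - (k ^ 2 - 2 * a)) := by
  linear_combination hQ - hT - (x - a) * hk

theorem tangent_over_verticals_eq_inv_oppositeTangent_general {K : Type*} [Field K]
    (hchar : ringChar K ≠ 2) (A B a b k α x y : K)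
    (hT : b ^ 2 = a ^ 3 + A * a + B) (hb : b ≠ 0)
    (hk : k = (3 * a ^ 2 + A) / (2 * b)) (hα : α = k ^ 2 - 2 * a)
    (hQ : y ^ 2 = x ^ 3 + A * x + B)
    (hxa : x ≠ a) (hxα : x ≠ α) :
    (y - b - k * (x - a)) / ((x - a) ^ 2 * (x - α)) =
      1 / (y + b + k * (x - a)) := by
  have hk' : k * (2 * b) = 3 * a ^ 2 + A := by
    rw [hk, div_mul_cancel₀ _ (mul_ne_zero (Ring.two_ne_zero hchar) hb)]
  have hprod := tangent_mul_oppositeTangent_eq_verticals hT hQ hk'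
  rw [← hα] at hprod
  have hV : (x - a) ^ 2 * (x - α) ≠ 0 :=
    mul_ne_zero (pow_ne_zero 2 (sub_ne_zero.mpr hxa)) (sub_ne_zero.mpr hxα)
  have hL : y + b + k * (x - a) ≠ 0 := right_ne_zero_of_mul (hprod ▸ hV)
  rw [div_eq_div_iff hV hL, one_mul, hprod]

/-- **Lemma 3 (Equation (3)) of the paper.**
Let `T = (a, b)` be an affine point on `E : y² = x³ + A·x + B` over a field of
characteristic `≠ 2`, with `b ≠ 0`, tangent slope `k = (3a² + A)/(2b)` and
`α = k² − 2a`.  If `Q = (x, y)` is a point of `E` with `x ≠ a`, `x ≠ α` and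
`y + b + k·(x − a) ≠ 0`, then
`L_{T,T}(Q)/(V_T(Q)²·V_{2T}(Q)) = 1/L_{−T,−T}(Q)`. -/
theorem tangent_over_verticals_eq_inv_oppositeTangent {K : Type*} [Field K]
    (hchar : ringChar K ≠ 2) (A B a b k α x y : K)
    (hT : b ^ 2 = a ^ 3 + A * a + B) (hb : b ≠ 0)
    (hk : k = (3 * a ^ 2 + A) / (2 * b)) (hα : α = k ^ 2 - 2 * a)
    (hQ : y ^ 2 = x ^ 3 + A * x + B)
    (hxa : x ≠ a) (hxα : x ≠ α) (hL : y + b + k * (x - a) ≠ 0) :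
    (y - b - k * (x - a)) / ((x - a) ^ 2 * (x - α)) =
      1 / (y + b + k * (x - a)) :=
  tangent_over_verticals_eq_inv_oppositeTangent_general hchar A B a b k α x y hT hb hk hα hQ hxa hxα
end

section
/- Let E : y² = x³ + A·x + B be an elliptic curve over a field K with char K ≠ 2. Let T = (a, b) be an affine point on E with b ≠ 0, let k = (3a² + A)/(2b), and set α = k² − 2a. Define L_{T,T}(x, y) = y − b − k·(x − a), V_T(x, y) = x − a, and V_{2T}(x, y) = x − α. Then for every point Q = (x, y) ∈ K² satisfying y² = x³ + A·x + B, denoting −Q = (x, −y), one has L_{T,T}(Q)·L_{T,T}(−Q) = −V_T(Q)²·V_{2T}(Q); consequently, if all the factors are nonzero, L_{T,T}(Q)/(V_T(Q)²·V_{2T}(Q)) = −1/L_{T,T}(−Q). -/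
/-! The product `L_{T,T}(Q) · L_{T,T}(−Q)` equals `(b + k(x − a))² − y²`. Substituting the curve
equations for `b²` and `y²` and the tangent condition `2bk = 3a² + A` turns it into a cubic in `x`
vanishing to order two at `x = a`; comparing the coefficients of `x²` gives its third root
`k² − 2a`, the abscissa of `2T`. -/

theorem tangent_line_mul_reflection_eq {R : Type*} [CommRing R] {A B a b k x y : R}
    (hT : b ^ 2 = a ^ 3 + A * a + B) (hQ : y ^ 2 = x ^ 3 + A * x + B)
    (hslope : k * (2 * b) = 3 * a ^ 2 + A) :
    (y - b - k * (x - a)) * (-y - b - k * (x - a)) = -((x - a) ^ 2 * (x - (k ^ 2 - 2 * a))) := by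
  linear_combination hT - hQ + (x - a) * hslope

theorem div_eq_neg_one_div_of_mul_eq_neg {K : Type*} [Field K] {l l' d : K}
    (h : l * l' = -d) (hl : l ≠ 0) : l / d = -(1 / l') := by
  rw [← neg_neg d, ← h, div_neg, div_mul_cancel_left₀ hl, one_div]

/-- **Equation (1) of the paper (Blake–Murty–Xu's identity).**
Let `T = (a, b)` be an affine point on `E : y² = x³ + A·x + B` over a field of
characteristic `≠ 2`, with `b ≠ 0`, tangent slope `k = (3a² + A)/(2b)` and
`α = k² − 2a`.  With `L_{T,T}(x, y) = y − b − k·(x − a)`, `V_T(x, y) = x − a`,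
`V_{2T}(x, y) = x − α`, every point `Q = (x, y)` on `E`, whose negative is
`−Q = (x, −y)`, satisfies `L_{T,T}(Q)·L_{T,T}(−Q) = −V_T(Q)²·V_{2T}(Q)`;
consequently, if all the factors are nonzero,
`L_{T,T}(Q)/(V_T(Q)²·V_{2T}(Q)) = −1/L_{T,T}(−Q)`. -/
theorem BMX_tangent_identity {K : Type*} [Field K]
    (hchar : ringChar K ≠ 2) (A B a b k α : K)
    (hT : b ^ 2 = a ^ 3 + A * a + B) (hb : b ≠ 0)
    (hk : k = (3 * a ^ 2 + A) / (2 * b)) (hα : α = k ^ 2 - 2 * a) :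
    ∀ x y : K, y ^ 2 = x ^ 3 + A * x + B →
      (y - b - k * (x - a)) * (-y - b - k * (x - a)) =
        -((x - a) ^ 2 * (x - α)) ∧
      ((y - b - k * (x - a)) ≠ 0 → (-y - b - k * (x - a)) ≠ 0 →
        (x - a) ≠ 0 → (x - α) ≠ 0 →
        (y - b - k * (x - a)) / ((x - a) ^ 2 * (x - α)) =
          -(1 / (-y - b - k * (x - a)))) := by
  intro x y hQ
  have hslope : k * (2 * b) = 3 * a ^ 2 + A :=
    hk ▸ div_mul_cancel₀ _ (mul_ne_zero (Ring.two_ne_zero hchar) hb)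
  have hprod := hα ▸ tangent_line_mul_reflection_eq hT hQ hslope
  exact ⟨hprod, fun hL _ _ _ => div_eq_neg_one_div_of_mul_eq_neg hprod hL⟩
end

section
/- Let E : y² = x³ + A·x + B be an elliptic curve over a field K with char K ≠ 2. Let T = (x₁, y₁) be an affine point on E with y₁ ≠ 0, let λ₁ = (3x₁² + A)/(2y₁), x₃ = λ₁² − 2x₁, y₃ = λ₁·(x₁ − x₃) − y₁ (so 2T = (x₃, y₃)). Let P = (x₂, y₂) be an affine point on E with x₂ ≠ x₃, and let λ₂ = (y₂ − y₃)/(x₂ − x₃). Then for every point (x, y) ∈ K² satisfying y² = x³ + A·x + B, one has (y + y₃ − λ₁·(x − x₃))·(y − y₃ − λ₂·(x − x₃)) = (x − x₃)·[(x − x₁)·(x + x₁ + x₃ + λ₁·λ₂) − (λ₁ + λ₂)·(y − y₁)]. -/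
/-!
The tangent line `y = y₁ + λ₁·(x − x₁)` at `T` meets `E` at `T` twice and at `−2T`, so on `E`
`y² − (y₁ + λ₁·(x − x₁))² = (x − x₁)²·(x − x₃)`. Since both lines pass through `(x₃, −y₃)`
and `(x₃, y₃)` respectively, the sum of their ordinates at `x` is `(λ₁ + λ₂)·(x − x₃)`; expanding
the product of the two factors with these two facts leaves `(x − x₃)` times the bracket.
-/

theorem cubic_sub_sq_tangent_eq {R : Type*} [CommRing R] {A B x₁ y₁ l : R}
    (hT : y₁ ^ 2 = x₁ ^ 3 + A * x₁ + B) (hl : l * (2 * y₁) = 3 * x₁ ^ 2 + A) (x : R) :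
    x ^ 3 + A * x + B - (y₁ + l * (x - x₁)) ^ 2 = (x - x₁) ^ 2 * (x - (l ^ 2 - 2 * x₁)) := by
  linear_combination -hT - (x - x₁) * hl

theorem ELM_parabola_doubling_addition_general {K : Type*} [Field K]
    (hchar : ringChar K ≠ 2) (A B x₁ y₁ x₃ y₃ l₁ l₂ : K)
    (hT : y₁ ^ 2 = x₁ ^ 3 + A * x₁ + B) (hy₁ : y₁ ≠ 0)
    (hl₁ : l₁ = (3 * x₁ ^ 2 + A) / (2 * y₁))
    (hx₃ : x₃ = l₁ ^ 2 - 2 * x₁) (hy₃ : y₃ = l₁ * (x₁ - x₃) - y₁) :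
    ∀ x y : K, y ^ 2 = x ^ 3 + A * x + B →
      (y + y₃ - l₁ * (x - x₃)) * (y - y₃ - l₂ * (x - x₃)) =
        (x - x₃) * ((x - x₁) * (x + x₁ + x₃ + l₁ * l₂) - (l₁ + l₂) * (y - y₁)) := by
  intro x y hE
  have hslope : l₁ * (2 * y₁) = 3 * x₁ ^ 2 + A := by
    rw [hl₁]
    exact div_mul_cancel₀ _ (mul_ne_zero (Ring.two_ne_zero hchar) hy₁)
  subst hy₃ hx₃
  linear_combination hE + cubic_sub_sq_tangent_eq hT hslope x

/-- **Equation (5) of the paper: the Eisenträger–Lauter–Montgomery parabola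
for the combined doubling-and-addition step `2T + P`.**
Let `T = (x₁, y₁)` be an affine point on `E : y² = x³ + A·x + B` (over a field of
characteristic `≠ 2`) with `y₁ ≠ 0`, tangent slope `λ₁ = (3x₁² + A)/(2y₁)`,
`x₃ = λ₁² − 2x₁`, `y₃ = λ₁·(x₁ − x₃) − y₁` (so `2T = (x₃, y₃)`).  Let
`P = (x₂, y₂)` be an affine point on `E` with `x₂ ≠ x₃` and let
`λ₂ = (y₂ − y₃)/(x₂ − x₃)`.  Then for every point `(x, y)` on `E`,
`(y + y₃ − λ₁·(x − x₃))·(y − y₃ − λ₂·(x − x₃))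
  = (x − x₃)·[(x − x₁)·(x + x₁ + x₃ + λ₁·λ₂) − (λ₁ + λ₂)·(y − y₁)]`. -/
theorem ELM_parabola_doubling_addition {K : Type*} [Field K]
    (hchar : ringChar K ≠ 2) (A B x₁ y₁ x₂ y₂ x₃ y₃ l₁ l₂ : K)
    (hT : y₁ ^ 2 = x₁ ^ 3 + A * x₁ + B) (hy₁ : y₁ ≠ 0)
    (hl₁ : l₁ = (3 * x₁ ^ 2 + A) / (2 * y₁))
    (hx₃ : x₃ = l₁ ^ 2 - 2 * x₁) (hy₃ : y₃ = l₁ * (x₁ - x₃) - y₁)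
    (hP : y₂ ^ 2 = x₂ ^ 3 + A * x₂ + B) (hx₂₃ : x₂ ≠ x₃)
    (hl₂ : l₂ = (y₂ - y₃) / (x₂ - x₃)) :
    ∀ x y : K, y ^ 2 = x ^ 3 + A * x + B →
      (y + y₃ - l₁ * (x - x₃)) * (y - y₃ - l₂ * (x - x₃)) =
        (x - x₃) * ((x - x₁) * (x + x₁ + x₃ + l₁ * l₂) - (l₁ + l₂) * (y - y₁)) :=
  ELM_parabola_doubling_addition_general hchar A B x₁ y₁ x₃ y₃ l₁ l₂ hT hy₁ hl₁ hx₃ hy₃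
end

section
/- Let E : y² = x³ + A·x + B be an elliptic curve over a field K. Let R = (x₁, y₁) and S = (x₂, y₂) be affine points on E with x₁ ≠ x₂, let λ₁ = (y₂ − y₁)/(x₂ − x₁), x₃ = λ₁² − x₁ − x₂, y₃ = λ₁·(x₁ − x₃) − y₁ (so R + S = (x₃, y₃)). Suppose x₁ ≠ x₃ and let λ₂ = (y₁ − y₃)/(x₁ − x₃). Then for every point (x, y) ∈ K² satisfying y² = x³ + A·x + B, one has (y + y₃ − λ₁·(x − x₃))·(y − y₃ − λ₂·(x − x₃)) = (x − x₃)·[(x − x₁)·(x + x₁ + x₃ + λ₁·λ₂) − (λ₁ + λ₂)·(y − y₁)]. -/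
/-!
`R + S` lies on `E` by Mathlib's affine group law. For points `P = (x₁, y₁)`, `Q = (x₃, y₃)` of `E`
with `x₁ ≠ x₃` and chord slope `λ`, dividing `y₁² − y₃² = (x₁ − x₃)(x₁² + x₁x₃ + x₃² + A)` by
`x₁ − x₃` gives `λ(y₁ + y₃) = x₁² + x₁x₃ + x₃² + A`. Together with the curve equations at `(x, y)`
and `Q` this yields the identity as a linear combination, whatever the slope of the line through
`−Q`.
-/

namespace ShortWeierstrass

variable {K : Type*} [Field K] {A B : K}

def curve (A B : K) : WeierstrassCurve.Affine K := ⟨0, 0, 0, A, B⟩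

lemma equation_curve_iff (x y : K) :
    (curve A B).Equation x y ↔ y ^ 2 = x ^ 3 + A * x + B := by
  simp [WeierstrassCurve.Affine.equation_iff, curve]

lemma slope_mul_add_eq {x₁ y₁ x₂ y₂ l : K} (h₁ : y₁ ^ 2 = x₁ ^ 3 + A * x₁ + B)
    (h₂ : y₂ ^ 2 = x₂ ^ 3 + A * x₂ + B) (hx : x₁ ≠ x₂) (hl : l * (x₁ - x₂) = y₁ - y₂) :
    l * (y₁ + y₂) = x₁ ^ 2 + x₁ * x₂ + x₂ ^ 2 + A := by
  refine mul_right_cancel₀ (sub_ne_zero.mpr hx) ?_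
  linear_combination (y₁ + y₂) * hl + h₁ - h₂

lemma equation_add_of_ne {x₁ y₁ x₂ y₂ l x₃ y₃ : K} (h₁ : y₁ ^ 2 = x₁ ^ 3 + A * x₁ + B)
    (h₂ : y₂ ^ 2 = x₂ ^ 3 + A * x₂ + B) (hx : x₁ ≠ x₂) (hl : l = (y₂ - y₁) / (x₂ - x₁))
    (hx₃ : x₃ = l ^ 2 - x₁ - x₂) (hy₃ : y₃ = l * (x₁ - x₃) - y₁) :
    y₃ ^ 2 = x₃ ^ 3 + A * x₃ + B := by
  classical
  have h := (curve A B).equation_add ((equation_curve_iff _ _).mpr h₁)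
    ((equation_curve_iff _ _).mpr h₂) (fun h => hx h.1)
  rw [WeierstrassCurve.Affine.slope_of_X_ne hx, ← neg_div_neg_eq, neg_sub, neg_sub, ← hl,
    equation_curve_iff] at h
  simp only [WeierstrassCurve.Affine.addY, WeierstrassCurve.Affine.negY,
    WeierstrassCurve.Affine.negAddY, WeierstrassCurve.Affine.addX, curve] at h
  subst hy₃ hx₃
  linear_combination h

lemma line_mul_line_eq_vertical_mul {x₁ y₁ x₃ y₃ l₂ x y : K} (h₁ : y₁ ^ 2 = x₁ ^ 3 + A * x₁ + B)
    (h₃ : y₃ ^ 2 = x₃ ^ 3 + A * x₃ + B) (h : y ^ 2 = x ^ 3 + A * x + B) (hx : x₁ ≠ x₃)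
    (hl₂ : l₂ * (x₁ - x₃) = y₁ - y₃) (l₁ : K) :
    (y + y₃ - l₁ * (x - x₃)) * (y - y₃ - l₂ * (x - x₃)) =
      (x - x₃) * ((x - x₁) * (x + x₁ + x₃ + l₁ * l₂) - (l₁ + l₂) * (y - y₁)) := by
  linear_combination h - h₃ + (x - x₃) * l₁ * hl₂ - (x - x₃) * slope_mul_add_eq h₁ h₃ hx hl₂

end ShortWeierstrass

open ShortWeierstrass in
/-- **Equation (4) of the paper: the Eisenträger–Lauter–Montgomery parabola
substitution for computing `2R + S` directly.**
Let `R = (x₁, y₁)` and `S = (x₂, y₂)` be affine points on `E : y² = x³ + A·x + B`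
with `x₁ ≠ x₂`, chord slope `λ₁ = (y₂ − y₁)/(x₂ − x₁)`, `x₃ = λ₁² − x₁ − x₂`,
`y₃ = λ₁·(x₁ − x₃) − y₁` (so `R + S = (x₃, y₃)`).  Suppose `x₁ ≠ x₃` and let
`λ₂ = (y₁ − y₃)/(x₁ − x₃)`.  Then for every point `(x, y)` on `E`,
`(y + y₃ − λ₁·(x − x₃))·(y − y₃ − λ₂·(x − x₃))
  = (x − x₃)·[(x − x₁)·(x + x₁ + x₃ + λ₁·λ₂) − (λ₁ + λ₂)·(y − y₁)]`. -/
theorem ELM_parabola_double_add {K : Type*} [Field K]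
    (A B x₁ y₁ x₂ y₂ x₃ y₃ l₁ l₂ : K)
    (hR : y₁ ^ 2 = x₁ ^ 3 + A * x₁ + B) (hS : y₂ ^ 2 = x₂ ^ 3 + A * x₂ + B)
    (hx₁₂ : x₁ ≠ x₂) (hl₁ : l₁ = (y₂ - y₁) / (x₂ - x₁))
    (hx₃ : x₃ = l₁ ^ 2 - x₁ - x₂) (hy₃ : y₃ = l₁ * (x₁ - x₃) - y₁)
    (hx₁₃ : x₁ ≠ x₃) (hl₂ : l₂ = (y₁ - y₃) / (x₁ - x₃)) :
    ∀ x y : K, y ^ 2 = x ^ 3 + A * x + B →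
      (y + y₃ - l₁ * (x - x₃)) * (y - y₃ - l₂ * (x - x₃)) =
        (x - x₃) * ((x - x₁) * (x + x₁ + x₃ + l₁ * l₂) - (l₁ + l₂) * (y - y₁)) := by
  intro x y h
  have hRS : y₃ ^ 2 = x₃ ^ 3 + A * x₃ + B := equation_add_of_ne hR hS hx₁₂ hl₁ hx₃ hy₃
  have hl₂' : l₂ * (x₁ - x₃) = y₁ - y₃ := by
    rw [hl₂, div_mul_cancel₀ _ (sub_ne_zero.mpr hx₁₃)]
  exact line_mul_line_eq_vertical_mul hR hRS h hx₁₃ hl₂' l₁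
end
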